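/- arXiv:1102.2128 — 5 statements merged into one kernel-verified Lean document; each statement's English description precedes it below -/
import Mathlib

section
/- If f is a majority operation on a set A and g is any nontrivial (non-projection) operation in the clone generated by f, then g is a near-unanimity operation, i.e., g(y,x,...,x) = g(x,y,x,...,x) = ... = g(x,...,x,y) = x for all x, y in A. -/
/-- An `n`-ary operation is a projection onto one of its variables. -/
def IsProjection {A : Type*} {n : ℕ} (g : (Fin n → A) → A) : Prop :=
  ∃ i : Fin n, ∀ x : Fin n → A, g x = x i

/-- Membership in the clone generated by a single ternary operation `f`:
the smallest set of finitary operations containing `f`, all projections,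
and closed under composition. -/
inductive InClone {A : Type*} (f : (Fin 3 → A) → A) :
    ∀ n : ℕ, ((Fin n → A) → A) → Prop
  | gen : InClone f 3 f
  | proj (n : ℕ) (i : Fin n) : InClone f n (fun x => x i)
  | comp {n k : ℕ} (g : (Fin n → A) → A) (h : Fin n → (Fin k → A) → A) :
      InClone f n g → (∀ i, InClone f k (h i)) →
      InClone f k (fun x => g (fun i => h i x))

/-- A ternary operation is a majority operation. -/
def IsMajority {A : Type*} (f : (Fin 3 → A) → A) : Prop :=
  ∀ x y : A, f ![x, x, y] = x ∧ f ![x, y, x] = x ∧ f ![y, x, x] = x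

/-- An `n`-ary operation is a near-unanimity operation: it returns `x`
whenever at most one argument differs from `x`. -/
def IsNearUnanimity {A : Type*} {n : ℕ} (g : (Fin n → A) → A) : Prop :=
  ∀ (x y : A) (i : Fin n), g (Function.update (fun _ => x) i y) = x

/-- Every nontrivial operation in the clone generated by a majority operation
is a near-unanimity operation. -/
theorem nontrivial_in_majority_clone_is_near_unanimity {A : Type*}
    (f : (Fin 3 → A) → A) (hf : IsMajority f) {n : ℕ} (g : (Fin n → A) → A)
    (hg : InClone f n g) (hng : ¬ IsProjection g) : IsNearUnanimity g := by
  have key : ∀ (m : ℕ) (g : (Fin m → A) → A), InClone f m g →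
      ∃ B : (Fin m → Bool) → Bool,
        (∀ (x y : A) (z : Fin m → Bool),
          g (fun i => if z i then y else x) = if B z then y else x) ∧
        (∀ T : Fin m → Bool, B T = true → ∀ (z : Fin m → A) (c : A),
          (∀ i, T i = true → z i = c) → g z = c) := by
    intro m g hg
    induction hg with
    | gen =>
        refine ⟨fun z => (z 0 && z 1) || (z 1 && z 2) || (z 0 && z 2), ?_, ?_⟩
        · intro x y z
          rw [show (fun i => if z i then y else x) =
              ![if z 0 then y else x, if z 1 then y else x, if z 2 then y else x] from
            funext fun i => by fin_cases i <;> rfl]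
          rcases Bool.eq_false_or_eq_true (z 0) with h0 | h0 <;>
          rcases Bool.eq_false_or_eq_true (z 1) with h1 | h1 <;>
          rcases Bool.eq_false_or_eq_true (z 2) with h2 | h2 <;>
            simp [h0, h1, h2, (hf x y).1, (hf x y).2.1, (hf x y).2.2,
              (hf y x).1, (hf y x).2.1, (hf y x).2.2, (hf x x).1, (hf y y).1]
        · intro T hT z c hz
          rw [show z = ![z 0, z 1, z 2] from funext fun i => by fin_cases i <;> rfl]
          rcases Bool.eq_false_or_eq_true (T 0) with h0 | h0 <;>
          rcases Bool.eq_false_or_eq_true (T 1) with h1 | h1 <;>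
          rcases Bool.eq_false_or_eq_true (T 2) with h2 | h2
          · rw [hz 0 h0, hz 1 h1]; exact (hf c (z 2)).1
          · rw [hz 0 h0, hz 1 h1]; exact (hf c (z 2)).1
          · rw [hz 0 h0, hz 2 h2]; exact (hf c (z 1)).2.1
          · simp [h0, h1, h2] at hT
          · rw [hz 1 h1, hz 2 h2]; exact (hf c (z 0)).2.2
          · simp [h0, h1, h2] at hT
          · simp [h0, h1, h2] at hT
          · simp [h0, h1, h2] at hT
    | proj m i =>
        refine ⟨fun z => z i, fun x y z => rfl, ?_⟩
        intro T hT z c hz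
        exact hz i hT
    | comp g h _ _ ihg ihh =>
        obtain ⟨B, hB1, hB2⟩ := ihg
        choose C hC1 hC2 using ihh
        refine ⟨fun z => B (fun i => C i z), ?_, ?_⟩
        · intro x y z
          show g (fun i => h i (fun j => if z j then y else x)) = _
          rw [show (fun i => h i (fun j => if z j then y else x)) =
              (fun i => if C i z then y else x) from funext fun i => hC1 i x y z]
          exact hB1 x y (fun i => C i z)
        · intro T hT z c hz
          exact hB2 (fun i => C i T) hT (fun i => h i z) c
            (fun i hi => hC2 i T hi z c hz)
  intro x y i
  obtain ⟨B, hB1, hB2⟩ := key n g hg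
  have hu : Function.update (fun _ => x) i y
      = fun j : Fin n => if (decide (j = i) : Bool) then y else x := by
    funext j
    by_cases hj : j = i <;> simp [Function.update_apply, hj]
  rw [hu, hB1 x y (fun j => decide (j = i))]
  by_cases hBi : B (fun j => decide (j = i)) = true
  · exact absurd ⟨i, fun z => hB2 _ hBi z (z i)
      (fun j hj => by rw [of_decide_eq_true hj])⟩ hng
  · simp [hBi]
end

section
/- Let f be a totally symmetric majority operation on a set A satisfying f(f(x,y,z),y,z) = f(x,y,z) for all x,y,z (equivalently, f•f = f). Then the only nontrivial ternary operation in the clone generated by f is f itself; i.e., every ternary operation generated by f is either a projection or equal to f. -/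
section Aux

variable {A : Type*}

lemma eta3 (v : Fin 3 → A) : ![v 0, v 1, v 2] = v := by
  funext j; fin_cases j <;> simp

lemma s01 (f : (Fin 3 → A) → A)
    (hsym : ∀ (v : Fin 3 → A) (π : Equiv.Perm (Fin 3)), f (v ∘ π) = f v)
    (a b c : A) : f ![a,b,c] = f ![b,a,c] := by
  have h2 : (![a,b,c] ∘ (Equiv.swap 0 1 : Equiv.Perm (Fin 3))) = ![b,a,c] := by
    funext j; fin_cases j <;> simp [Equiv.swap_apply_def]
  rw [← h2, hsym]

lemma s12 (f : (Fin 3 → A) → A)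
    (hsym : ∀ (v : Fin 3 → A) (π : Equiv.Perm (Fin 3)), f (v ∘ π) = f v)
    (a b c : A) : f ![a,b,c] = f ![a,c,b] := by
  have h2 : (![a,b,c] ∘ (Equiv.swap 1 2 : Equiv.Perm (Fin 3))) = ![a,c,b] := by
    funext j; fin_cases j <;> simp [Equiv.swap_apply_def]
  rw [← h2, hsym]

lemma s02 (f : (Fin 3 → A) → A)
    (hsym : ∀ (v : Fin 3 → A) (π : Equiv.Perm (Fin 3)), f (v ∘ π) = f v)
    (a b c : A) : f ![a,b,c] = f ![c,b,a] := by
  rw [s01 f hsym, s12 f hsym, s01 f hsym]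

/-- The core combinatorial step: `f` applied to a tuple of projections-or-`f`
is again a projection or `f`. -/
lemma main_step (f : (Fin 3 → A) → A)
    (hf : IsMajority f)
    (hsym : ∀ (v : Fin 3 → A) (π : Equiv.Perm (Fin 3)), f (v ∘ π) = f v)
    (hidem : ∀ x y z : A, f ![f ![x, y, z], y, z] = f ![x, y, z])
    (h : Fin 3 → ((Fin 3 → A) → A))
    (hh : ∀ j, IsProjection (h j) ∨ h j = f) :
    IsProjection (fun x => f (fun j => h j x)) ∨ (fun x => f (fun j => h j x)) = f := by
  have m1 : ∀ a b : A, f ![a,a,b] = a := fun a b => (hf a b).1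
  have m2 : ∀ a b : A, f ![a,b,a] = a := fun a b => (hf a b).2.1
  have m3 : ∀ a b : A, f ![b,a,a] = a := fun a b => (hf a b).2.2
  have p012 : ∀ x : Fin 3 → A, f ![x 0, x 1, x 2] = f x := fun x => congrArg f (eta3 x)
  have p021 : ∀ x : Fin 3 → A, f ![x 0, x 2, x 1] = f x := fun x => by
    rw [← s12 f hsym]; exact p012 x
  have p102 : ∀ x : Fin 3 → A, f ![x 1, x 0, x 2] = f x := fun x => by
    rw [← s01 f hsym]; exact p012 x
  have p210 : ∀ x : Fin 3 → A, f ![x 2, x 1, x 0] = f x := fun x => by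
    rw [← s02 f hsym]; exact p012 x
  have p120 : ∀ x : Fin 3 → A, f ![x 1, x 2, x 0] = f x := fun x => by
    rw [← s01 f hsym]; exact p210 x
  have p201 : ∀ x : Fin 3 → A, f ![x 2, x 0, x 1] = f x := fun x => by
    rw [← s12 f hsym]; exact p210 x
  -- one `f` in front, two distinct projections:
  have q : ∀ i j : Fin 3, i ≠ j → ∀ x : Fin 3 → A, f ![f x, x i, x j] = f x := by
    intro i j hij x
    fin_cases i <;> fin_cases j <;>
      first
        | exact absurd rfl hij
        | (rw [← p012 x]; exact hidem _ _ _)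
        | (rw [← p021 x]; exact hidem _ _ _)
        | (rw [← p102 x]; exact hidem _ _ _)
        | (rw [← p120 x]; exact hidem _ _ _)
        | (rw [← p201 x]; exact hidem _ _ _)
        | (rw [← p210 x]; exact hidem _ _ _)
  rcases hh 0 with ⟨i0, e0⟩ | e0 <;> rcases hh 1 with ⟨i1, e1⟩ | e1 <;>
    rcases hh 2 with ⟨i2, e2⟩ | e2
  · -- all projections
    have Hrw : (fun x => f (fun j => h j x)) = fun x => f ![x i0, x i1, x i2] := by
      funext x; congr 1; funext j; fin_cases j <;> simp [e0 x, e1 x, e2 x]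
    rw [Hrw]
    fin_cases i0 <;> fin_cases i1 <;> fin_cases i2 <;>
      first
        | (refine Or.inl ⟨0, fun x => ?_⟩; simp only [m1, m2, m3]; try rfl
           done)
        | (refine Or.inl ⟨1, fun x => ?_⟩; simp only [m1, m2, m3]; try rfl
           done)
        | (refine Or.inl ⟨2, fun x => ?_⟩; simp only [m1, m2, m3]; try rfl
           done)
        | (refine Or.inr (funext fun x => ?_)
           first
             | exact p012 x | exact p021 x | exact p102 x
             | exact p120 x | exact p201 x | exact p210 x)
  · -- proj, proj, f
    have Hrw : (fun x => f (fun j => h j x)) = fun x => f ![x i0, x i1, f x] := by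
      funext x; congr 1; funext j; fin_cases j <;> simp [e0 x, e1 x, e2]
    rw [Hrw]
    by_cases hij : i0 = i1
    · subst hij
      exact Or.inl ⟨i0, fun x => by
        show f ![x i0, x i0, f x] = x i0
        rw [s02 f hsym]; exact m3 _ _⟩
    · exact Or.inr (funext fun x => by
        show f ![x i0, x i1, f x] = f x
        rw [s02 f hsym]; exact q i1 i0 (Ne.symm hij) x)
  · -- proj, f, proj
    have Hrw : (fun x => f (fun j => h j x)) = fun x => f ![x i0, f x, x i2] := by
      funext x; congr 1; funext j; fin_cases j <;> simp [e0 x, e1, e2 x]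
    rw [Hrw]
    by_cases hij : i0 = i2
    · subst hij
      exact Or.inl ⟨i0, fun x => by
        show f ![x i0, f x, x i0] = x i0
        rw [s01 f hsym]; exact m3 _ _⟩
    · exact Or.inr (funext fun x => by
        show f ![x i0, f x, x i2] = f x
        rw [s01 f hsym]; exact q i0 i2 hij x)
  · -- proj, f, f
    have Hrw : (fun x => f (fun j => h j x)) = fun x => f ![x i0, f x, f x] := by
      funext x; congr 1; funext j; fin_cases j <;> simp [e0 x, e1, e2]
    rw [Hrw]
    exact Or.inr (funext fun x => m3 _ _)
  · -- f, proj, proj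
    have Hrw : (fun x => f (fun j => h j x)) = fun x => f ![f x, x i1, x i2] := by
      funext x; congr 1; funext j; fin_cases j <;> simp [e0, e1 x, e2 x]
    rw [Hrw]
    by_cases hij : i1 = i2
    · subst hij
      exact Or.inl ⟨i1, fun x => m3 _ _⟩
    · exact Or.inr (funext fun x => q i1 i2 hij x)
  · -- f, proj, f
    have Hrw : (fun x => f (fun j => h j x)) = fun x => f ![f x, x i1, f x] := by
      funext x; congr 1; funext j; fin_cases j <;> simp [e0, e1 x, e2]
    rw [Hrw]
    exact Or.inr (funext fun x => m2 _ _)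
  · -- f, f, proj
    have Hrw : (fun x => f (fun j => h j x)) = fun x => f ![f x, f x, x i2] := by
      funext x; congr 1; funext j; fin_cases j <;> simp [e0, e1, e2 x]
    rw [Hrw]
    exact Or.inr (funext fun x => m1 _ _)
  · -- f, f, f
    have Hrw : (fun x => f (fun j => h j x)) = fun x => f ![f x, f x, f x] := by
      funext x; congr 1; funext j; fin_cases j <;> simp [e0, e1, e2]
    rw [Hrw]
    exact Or.inr (funext fun x => m1 _ _)

lemma clone_aux (f : (Fin 3 → A) → A)
    (hf : IsMajority f)
    (hsym : ∀ (v : Fin 3 → A) (π : Equiv.Perm (Fin 3)), f (v ∘ π) = f v)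
    (hidem : ∀ x y z : A, f ![f ![x, y, z], y, z] = f ![x, y, z]) :
    ∀ {n : ℕ} (g : (Fin n → A) → A), InClone f n g →
      ∀ h : Fin n → ((Fin 3 → A) → A), (∀ i, IsProjection (h i) ∨ h i = f) →
        IsProjection (fun x => g (fun i => h i x)) ∨ (fun x => g (fun i => h i x)) = f := by
  intro n g hg
  induction hg with
  | gen => exact main_step f hf hsym hidem
  | proj n i =>
    intro h hh
    rcases hh i with ⟨m, hm⟩ | hfeq
    · exact Or.inl ⟨m, fun x => hm x⟩
    · exact Or.inr (funext fun x => congrFun hfeq x)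
  | comp g hs hg hhs ihg ihhs =>
    intro u hu
    exact ihg (fun i => fun x => hs i (fun j => u j x)) (fun i => ihhs i u hu)

end Aux

/-- If `f` is a totally symmetric majority operation satisfying
`f(f(x,y,z),y,z) = f(x,y,z)`, then every ternary operation in the clone
generated by `f` is either a projection or `f` itself. -/
theorem clone_of_symmetric_idempotent_majority {A : Type*} (f : (Fin 3 → A) → A)
    (hf : IsMajority f)
    (hsym : ∀ (v : Fin 3 → A) (π : Equiv.Perm (Fin 3)), f (v ∘ π) = f v)
    (hidem : ∀ x y z : A, f ![f ![x, y, z], y, z] = f ![x, y, z]) :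
    ∀ g : (Fin 3 → A) → A, InClone f 3 g → IsProjection g ∨ g = f := by
  intro g hg
  have := clone_aux f hf hsym hidem g hg (fun j => fun x => x j)
    (fun j => Or.inl ⟨j, fun x => rfl⟩)
  exact this
end

section
/- For every n > 6, the algebra A_n = ({1,...,n}; f), where f is the totally symmetric majority operation defined for 1 ≤ a < b < c ≤ n by f(a,b,c) = a if ⌈(a+c)/2⌉ < b, f(a,b,c) = b if b = ⌊(a+c)/2⌋ or b = ⌈(a+c)/2⌉, and f(a,b,c) = c if b < ⌊(a+c)/2⌋, is a simple algebra: its only congruences are the identity relation and the total relation. -/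
/-- The value of the interval-midpoint majority operation on a sorted triple
`a ≤ b ≤ c` (including the majority rule when two entries coincide);
`(a+c)/2` is `⌊(a+c)/2⌋` and `(a+c+1)/2` is `⌈(a+c)/2⌉`. -/
def fbase (a b c : ℕ) : ℕ :=
  if a = b ∨ b = c then b
  else if (a + c + 1) / 2 < b then a
  else if b = (a + c) / 2 ∨ b = (a + c + 1) / 2 then b
  else c

/-- The middle element of a triple of naturals. -/
def mid3 (x y z : ℕ) : ℕ := x + y + z - max x (max y z) - min x (min y z)

/-- The interval-midpoint majority operation, extended to all triples by
total symmetry (via sorting) and the majority rule. -/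
def fA (x y z : ℕ) : ℕ := fbase (min x (min y z)) (mid3 x y z) (max x (max y z))

lemma fbase_mem (a b c : ℕ) : fbase a b c = a ∨ fbase a b c = b ∨ fbase a b c = c := by
  unfold fbase; split_ifs <;> simp

lemma mid3_mem (x y z : ℕ) : mid3 x y z = x ∨ mid3 x y z = y ∨ mid3 x y z = z := by
  unfold mid3
  rcases le_total x y with h1 | h1 <;> rcases le_total y z with h2 | h2 <;>
    rcases le_total x z with h3 | h3 <;> simp [max_def, min_def, h1, h2, h3] <;> omega

lemma fA_conservative (x y z : ℕ) : fA x y z = x ∨ fA x y z = y ∨ fA x y z = z := by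
  unfold fA
  rcases fbase_mem (min x (min y z)) (mid3 x y z) (max x (max y z)) with h | h | h
  · rw [h]; rcases min_choice y z with h' | h' <;> rcases min_choice x (min y z) with h'' | h'' <;>
      simp_all
  · rw [h]; exact mid3_mem x y z
  · rw [h]; rcases max_choice y z with h' | h' <;> rcases max_choice x (max y z) with h'' | h'' <;>
      simp_all

/-- The interval-midpoint majority operation on the carrier `{1, …, n}`. -/
def F (n : ℕ) (x y z : {a : ℕ // 1 ≤ a ∧ a ≤ n}) : {a : ℕ // 1 ≤ a ∧ a ≤ n} :=
  ⟨fA x.val y.val z.val, by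
    rcases fA_conservative x.val y.val z.val with h | h | h <;> rw [h] <;>
      [exact x.property; exact y.property; exact z.property]⟩

/- ### Auxiliary computation lemmas -/

lemma fA_eq (a b c : ℕ) (h1 : a ≤ b) (h2 : b ≤ c) : fA a b c = fbase a b c := by
  unfold fA mid3
  rw [min_eq_left h2, min_eq_left h1, max_eq_right h2, max_eq_right (le_trans h1 h2)]
  have h : a + b + c - c - a = b := by omega
  rw [h]

lemma fbase_eval_a (a b c : ℕ) (h1 : a < b) (h2 : b < c) (h : (a + c + 1) / 2 < b) :
    fbase a b c = a := by
  unfold fbase; split_ifs <;> omega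

lemma fbase_eval_b (a b c : ℕ) (h1 : a < b) (h2 : b < c)
    (h : b = (a + c) / 2 ∨ b = (a + c + 1) / 2) : fbase a b c = b := by
  unfold fbase; split_ifs <;> omega

lemma fbase_eval_c (a b c : ℕ) (h1 : a < b) (h2 : b < c) (h : b < (a + c) / 2) :
    fbase a b c = c := by
  unfold fbase; split_ifs <;> omega

lemma fA_comm12 (x y z : ℕ) : fA x y z = fA y x z := by
  unfold fA mid3
  rw [min_left_comm, max_left_comm, show x + y + z = y + x + z by ring]

lemma fA_comm23 (x y z : ℕ) : fA x y z = fA x z y := by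
  unfold fA mid3
  rw [min_comm y z, max_comm y z, show x + y + z = x + z + y by ring]

lemma fA_xxy (x y : ℕ) : fA x x y = x := by
  rcases le_total x y with h | h
  · rw [fA_eq x x y le_rfl h]; unfold fbase; rw [if_pos (Or.inl rfl)]
  · rw [fA_comm23, fA_comm12, fA_eq y x x h le_rfl]; unfold fbase
    rw [if_pos (Or.inr rfl)]

lemma fA_xyx (x y : ℕ) : fA x y x = x := by
  rw [fA_comm23]; exact fA_xxy x y

/- ### The relation on ℕ induced by a congruence -/

def Rl (n : ℕ) (θ : {a : ℕ // 1 ≤ a ∧ a ≤ n} → {a : ℕ // 1 ≤ a ∧ a ≤ n} → Prop)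
    (x y : ℕ) : Prop :=
  ∃ (hx : 1 ≤ x ∧ x ≤ n) (hy : 1 ≤ y ∧ y ≤ n), θ ⟨x, hx⟩ ⟨y, hy⟩

lemma Rl_mem {n : ℕ} {θ : {a : ℕ // 1 ≤ a ∧ a ≤ n} → {a : ℕ // 1 ≤ a ∧ a ≤ n} → Prop}
    {x y : ℕ} (h : Rl n θ x y) : (1 ≤ x ∧ x ≤ n) ∧ (1 ≤ y ∧ y ≤ n) := by
  obtain ⟨h1, h2, -⟩ := h; exact ⟨h1, h2⟩

def Clq (n : ℕ) (θ : {a : ℕ // 1 ≤ a ∧ a ≤ n} → {a : ℕ // 1 ≤ a ∧ a ≤ n} → Prop)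
    (a b : ℕ) : Prop :=
  ∀ i j, a ≤ i → i ≤ b → a ≤ j → j ≤ b → Rl n θ i j

section Main

variable {n : ℕ} {θ : {a : ℕ // 1 ≤ a ∧ a ≤ n} → {a : ℕ // 1 ≤ a ∧ a ≤ n} → Prop}
  (hequiv : Equivalence θ)
  (hcong : ∀ a₁ a₂ a₃ b₁ b₂ b₃, θ a₁ b₁ → θ a₂ b₂ → θ a₃ b₃ →
      θ (F n a₁ a₂ a₃) (F n b₁ b₂ b₃))

set_option linter.unusedSectionVars false

include hequiv hcong

lemma Rl_refl (x : ℕ) (hx : 1 ≤ x ∧ x ≤ n) : Rl n θ x x :=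
  ⟨hx, hx, hequiv.refl _⟩

lemma Rl_symm {x y : ℕ} (h : Rl n θ x y) : Rl n θ y x := by
  obtain ⟨h1, h2, h⟩ := h; exact ⟨h2, h1, hequiv.symm h⟩

lemma Rl_trans {x y z : ℕ} (h : Rl n θ x y) (h' : Rl n θ y z) : Rl n θ x z := by
  obtain ⟨h1, h2, h⟩ := h; obtain ⟨h2', h3, h'⟩ := h'
  exact ⟨h1, h3, hequiv.trans h h'⟩

lemma Rl_cong {x1 x2 x3 y1 y2 y3 : ℕ} (r1 : Rl n θ x1 y1) (r2 : Rl n θ x2 y2)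
    (r3 : Rl n θ x3 y3) : Rl n θ (fA x1 x2 x3) (fA y1 y2 y3) := by
  obtain ⟨a1, b1, r1⟩ := r1; obtain ⟨a2, b2, r2⟩ := r2; obtain ⟨a3, b3, r3⟩ := r3
  have mx : 1 ≤ fA x1 x2 x3 ∧ fA x1 x2 x3 ≤ n := by
    rcases fA_conservative x1 x2 x3 with h | h | h <;> rw [h] <;> assumption
  have my : 1 ≤ fA y1 y2 y3 ∧ fA y1 y2 y3 ≤ n := by
    rcases fA_conservative y1 y2 y3 with h | h | h <;> rw [h] <;> assumption
  exact ⟨mx, my, hcong ⟨x1, a1⟩ ⟨x2, a2⟩ ⟨x3, a3⟩ ⟨y1, b1⟩ ⟨y2, b2⟩ ⟨y3, b3⟩ r1 r2 r3⟩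

/-- If `a θ b` then the whole interval `[a,b]` is a `θ`-clique. -/
lemma clique_of_rel : ∀ d a b, a ≤ b → b - a ≤ d → Rl n θ a b → Clq n θ a b := by
  intro d
  induction d with
  | zero =>
    intro a b hab hd h i j hi1 hi2 hj1 hj2
    have hi : i = a := by omega
    have hj : j = a := by omega
    rw [hi, hj]
    exact Rl_refl hequiv hcong a (Rl_mem h).1
  | succ d IH =>
    intro a b hab hd h i j hi1 hi2 hj1 hj2
    obtain ⟨⟨ha1, ha2⟩, hb1, hb2⟩ := Rl_mem h
    by_cases hsmall : b - a ≤ 1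
    · have hii : i = a ∨ i = b := by omega
      have hjj : j = a ∨ j = b := by omega
      rcases hii with rfl | rfl <;> rcases hjj with rfl | rfl
      · exact Rl_refl hequiv hcong _ ⟨ha1, ha2⟩
      · exact h
      · exact Rl_symm hequiv hcong h
      · exact Rl_refl hequiv hcong _ ⟨hb1, hb2⟩
    · have hd2 : a + 2 ≤ b := by omega
      set c0 := (a + b) / 2 with hc0
      set c1 := (a + b + 1) / 2 with hc1
      have hac0 : a < c0 := by omega
      have hc0b : c0 < b := by omega
      have hac1 : a < c1 := by omega
      have hc1b : c1 < b := by omega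
      have mc0 : 1 ≤ c0 ∧ c0 ≤ n := ⟨by omega, by omega⟩
      have mc1 : 1 ≤ c1 ∧ c1 ≤ n := ⟨by omega, by omega⟩
      -- R a c0
      have r1 : Rl n θ a c0 := by
        have := Rl_cong hequiv hcong (Rl_refl hequiv hcong a ⟨ha1, ha2⟩) (Rl_refl hequiv hcong c0 mc0) h
        rwa [fA_xyx, fA_eq a c0 b (by omega) (by omega),
          fbase_eval_b a c0 b hac0 hc0b (Or.inl rfl)] at this
      -- R c1 b
      have r2 : Rl n θ c1 b := by
        have := Rl_cong hequiv hcong h (Rl_refl hequiv hcong c1 mc1) (Rl_refl hequiv hcong b ⟨hb1, hb2⟩)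
        rwa [fA_eq a c1 b (by omega) (by omega),
          fbase_eval_b a c1 b hac1 hc1b (Or.inr rfl), fA_comm12,
          fA_eq c1 b b (by omega) le_rfl,
          show fbase c1 b b = b by unfold fbase; rw [if_pos (Or.inr rfl)]] at this
      have cl1 : Clq n θ a c0 := IH a c0 (by omega) (by omega) r1
      have cl2 : Clq n θ c1 b := IH c1 b (by omega) (by omega) r2
      have key : ∀ i, a ≤ i → i ≤ b → Rl n θ a i := by
        intro i h1 h2
        by_cases hic : i ≤ c0
        · exact cl1 a i le_rfl (by omega) h1 hic
        · exact Rl_trans hequiv hcong h (Rl_symm hequiv hcong (cl2 i b (by omega) h2 (by omega) le_rfl))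
      exact Rl_trans hequiv hcong (Rl_symm hequiv hcong (key i hi1 hi2)) (key j hj1 hj2)

/-- Grow a clique of length ≥ 3 upwards by one. -/
lemma growUp (a b : ℕ) (h3 : a + 3 ≤ b) (hb : b + 1 ≤ n) (hc : Clq n θ a b) :
    Clq n θ a (b + 1) := by
  obtain ⟨ha, -, -⟩ := hc a a le_rfl (by omega) le_rfl (by omega)
  set m1 := (a + b + 1) / 2 with hm1
  have hm1a : a + 2 ≤ m1 := by omega
  have hm1b : m1 + 1 ≤ b := by omega
  have rnew : Rl n θ (b + 1) m1 := by
    have := Rl_cong hequiv hcong (Rl_refl hequiv hcong a ha)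
      (hc (a + 1) m1 (by omega) (by omega) (by omega) (by omega))
      (Rl_refl hequiv hcong (b + 1) ⟨by omega, hb⟩)
    rwa [fA_eq a (a + 1) (b + 1) (by omega) (by omega),
      fbase_eval_c a (a + 1) (b + 1) (by omega) (by omega) (by omega),
      fA_eq a m1 (b + 1) (by omega) (by omega),
      fbase_eval_b a m1 (b + 1) (by omega) (by omega) (Or.inl (by omega))] at this
  have key : ∀ i, a ≤ i → i ≤ b + 1 → Rl n θ m1 i := by
    intro i h1 h2
    by_cases hib : i ≤ b
    · exact hc m1 i (by omega) (by omega) h1 hib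
    · have : i = b + 1 := by omega
      subst this
      exact Rl_symm hequiv hcong rnew
  intro i j hi1 hi2 hj1 hj2
  exact Rl_trans hequiv hcong (Rl_symm hequiv hcong (key i hi1 hi2)) (key j hj1 hj2)

/-- Grow a clique of length ≥ 3 downwards by one. -/
lemma growDown (a b : ℕ) (h3 : a + 4 ≤ b) (ha : 1 ≤ a) (hc : Clq n θ (a + 1) b) :
    Clq n θ a b := by
  obtain ⟨-, ⟨hb1', hbn⟩, -⟩ := hc b b (by omega) le_rfl (by omega) le_rfl
  have han : 1 ≤ a ∧ a ≤ n := ⟨ha, by omega⟩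
  set m2 := (a + b + 1) / 2 with hm2
  have hm2a : a + 2 ≤ m2 := by omega
  have hm2b : m2 + 2 ≤ b := by omega
  have rnew : Rl n θ a m2 := by
    have := Rl_cong hequiv hcong (Rl_refl hequiv hcong a han)
      (hc (m2 + 1) m2 (by omega) (by omega) (by omega) (by omega))
      (Rl_refl hequiv hcong b ⟨by omega, hbn⟩)
    rwa [fA_eq a (m2 + 1) b (by omega) (by omega),
      fbase_eval_a a (m2 + 1) b (by omega) (by omega) (by omega),
      fA_eq a m2 b (by omega) (by omega),
      fbase_eval_b a m2 b (by omega) (by omega) (Or.inr (by omega))] at this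
  have key : ∀ i, a ≤ i → i ≤ b → Rl n θ m2 i := by
    intro i h1 h2
    by_cases hia : a + 1 ≤ i
    · exact hc m2 i (by omega) (by omega) hia h2
    · have : i = a := by omega
      subst this
      exact Rl_symm hequiv hcong rnew
  intro i j hi1 hi2 hj1 hj2
  exact Rl_trans hequiv hcong (Rl_symm hequiv hcong (key i hi1 hi2)) (key j hj1 hj2)

/-- From an adjacent related pair, get a related pair at distance 3. -/
lemma seed (hn : 6 < n) (k : ℕ) (h : Rl n θ k (k + 1)) :
    ∃ c, 1 ≤ c ∧ c + 3 ≤ n ∧ Rl n θ c (c + 3) := by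
  obtain ⟨⟨hka, hkb⟩, hkc, hkd⟩ := Rl_mem h
  by_cases hup : k + 4 ≤ n
  · refine ⟨k, hka, by omega, ?_⟩
    have := Rl_cong hequiv hcong h (Rl_refl hequiv hcong (k + 3) ⟨by omega, by omega⟩)
      (Rl_refl hequiv hcong (k + 4) ⟨by omega, hup⟩)
    rwa [fA_eq k (k + 3) (k + 4) (by omega) (by omega),
      fbase_eval_a k (k + 3) (k + 4) (by omega) (by omega) (by omega),
      fA_eq (k + 1) (k + 3) (k + 4) (by omega) (by omega),
      fbase_eval_b (k + 1) (k + 3) (k + 4) (by omega) (by omega) (Or.inr (by omega))] at this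
  · obtain ⟨m, rfl⟩ : ∃ m, k = m + 3 := ⟨k - 3, by omega⟩
    have hm : 1 ≤ m := by omega
    refine ⟨m + 1, by omega, by omega, ?_⟩
    have := Rl_cong hequiv hcong (Rl_refl hequiv hcong m ⟨hm, by omega⟩)
      (Rl_refl hequiv hcong (m + 1) ⟨by omega, by omega⟩) h
    rwa [fA_eq m (m + 1) (m + 3) (by omega) (by omega),
      fbase_eval_b m (m + 1) (m + 3) (by omega) (by omega) (Or.inl (by omega)),
      fA_eq m (m + 1) (m + 4) (by omega) (by omega),
      fbase_eval_c m (m + 1) (m + 4) (by omega) (by omega) (by omega)] at this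

end Main

/-- For `n > 6`, the algebra `({1,…,n}; f)` with the interval-midpoint majority
operation is simple: its only congruences are the identity and the total relation. -/
theorem midpoint_algebra_simple (n : ℕ) (hn : 6 < n)
    (θ : {a : ℕ // 1 ≤ a ∧ a ≤ n} → {a : ℕ // 1 ≤ a ∧ a ≤ n} → Prop)
    (hequiv : Equivalence θ)
    (hcong : ∀ a₁ a₂ a₃ b₁ b₂ b₃, θ a₁ b₁ → θ a₂ b₂ → θ a₃ b₃ →
      θ (F n a₁ a₂ a₃) (F n b₁ b₂ b₃)) :
    (∀ a b, θ a b → a = b) ∨ (∀ a b, θ a b) := by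
  by_cases hid : ∀ a b, θ a b → a = b
  · exact Or.inl hid
  · right
    push_neg at hid
    obtain ⟨a, b, hab, hne⟩ := hid
    have hvne : a.val ≠ b.val := fun e => hne (Subtype.ext e)
    have hR : Rl n θ a.val b.val := ⟨a.2, b.2, hab⟩
    -- get a related pair x < y
    obtain ⟨x, y, hxy, hRxy⟩ : ∃ x y, x < y ∧ Rl n θ x y := by
      rcases lt_or_gt_of_ne hvne with h | h
      · exact ⟨a.val, b.val, h, hR⟩
      · exact ⟨b.val, a.val, h, Rl_symm hequiv hcong hR⟩
    have cl0 : Clq n θ x y :=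
      clique_of_rel hequiv hcong (y - x) x y (le_of_lt hxy) le_rfl hRxy
    obtain ⟨hx, hy, -⟩ := hRxy
    have hadj : Rl n θ x (x + 1) := cl0 x (x + 1) le_rfl (by omega) (by omega) (by omega)
    obtain ⟨c, hc1, hc2, hRc⟩ := seed hequiv hcong hn x hadj
    have cl3 : Clq n θ c (c + 3) :=
      clique_of_rel hequiv hcong 3 c (c + 3) (by omega) (by omega) hRc
    -- grow upwards to n
    have up : ∀ e, c + 3 + e ≤ n → Clq n θ c (c + 3 + e) := by
      intro e
      induction e with
      | zero => intro _; exact cl3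
      | succ e IH =>
        intro he
        have := growUp hequiv hcong c (c + 3 + e) (by omega) (by omega) (IH (by omega))
        have heq : c + 3 + (e + 1) = (c + 3 + e) + 1 := by omega
        rwa [heq]
    have cln : Clq n θ c n := by
      have := up (n - (c + 3)) (by omega)
      have heq : c + 3 + (n - (c + 3)) = n := by omega
      rwa [heq] at this
    -- grow downwards to 1
    have down : ∀ a, 1 ≤ a → a ≤ c → Clq n θ a n → Clq n θ 1 n := by
      intro a
      induction a with
      | zero => intro h; omega
      | succ a IH =>
        intro _ hle hclq
        by_cases ha0 : a = 0
        · subst ha0; exact hclq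
        · have : Clq n θ a n :=
            growDown hequiv hcong a n (by omega) (by omega) hclq
          exact IH (by omega) (by omega) this
    have cl1n : Clq n θ 1 n := down c hc1 le_rfl cln
    intro u v
    obtain ⟨h1, h2, huv⟩ := cl1n u.val v.val u.2.1 u.2.2 v.2.1 v.2.2
    exact huv
end

section
/- Let I be a subset of the domain of a majority operation f closed under the 'ideal' rule: whenever at least two of a, b, c belong to I, f(a,b,c) ∈ I. If f is the interval-midpoint majority operation on {1,...,n} (defined for a < b < c by: f(a,b,c) = a if ⌈(a+c)/2⌉ < b; f(a,b,c) = b if b ∈ {⌊(a+c)/2⌋, ⌈(a+c)/2⌉}; f(a,b,c) = c if b < ⌊(a+c)/2⌋; extended by total symmetry and the majority rule), then every such ideal I is convex: if a, c ∈ I and a ≤ b ≤ c, then b ∈ I. -/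
/-! Since `f(a, ⌊(a+c)/2⌋, c) = ⌊(a+c)/2⌋`, an ideal contains the floor midpoint of any two of its
elements, and a midpoint-closed set of naturals is convex: bisecting `[a, c]` keeps one half containing `b`,
with both endpoints in the set and strictly shorter length. -/

theorem fA_of_le_of_le {a b c : ℕ} (hab : a ≤ b) (hbc : b ≤ c) : fA a b c = fbase a b c := by
  have hmin : min a (min b c) = a := by rw [min_eq_left hbc, min_eq_left hab]
  have hmax : max a (max b c) = c := by rw [max_eq_right hbc, max_eq_right (hab.trans hbc)]
  have hmid : mid3 a b c = b := by simp only [mid3, hmin, hmax]; omega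
  rw [fA, hmin, hmax, hmid]

theorem fbase_floor_midpoint {a c : ℕ} (hac : a ≤ c) : fbase a ((a + c) / 2) c = (a + c) / 2 := by
  unfold fbase
  split_ifs <;> omega

theorem fA_floor_midpoint {a c : ℕ} (hac : a ≤ c) : fA a ((a + c) / 2) c = (a + c) / 2 := by
  rw [fA_of_le_of_le (by omega) (by omega), fbase_floor_midpoint hac]

theorem Set.ordConnected_of_floor_midpoint_mem {I : Set ℕ}
    (hmid : ∀ a ∈ I, ∀ c ∈ I, a ≤ c → (a + c) / 2 ∈ I) : I.OrdConnected := by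
  suffices h : ∀ d a c, c - a = d → a ∈ I → c ∈ I → ∀ b, a ≤ b → b ≤ c → b ∈ I from
    ⟨fun a ha c hc b ⟨hab, hbc⟩ => h _ a c rfl ha hc b hab hbc⟩
  intro d
  induction d using Nat.strong_induction_on with
  | _ d ih =>
    intro a c hd ha hc b hab hbc
    by_cases hshort : c - a ≤ 1
    · obtain rfl | rfl : b = a ∨ b = c := by omega
      exacts [ha, hc]
    have hm := hmid a ha c hc (by omega)
    by_cases hbm : b ≤ (a + c) / 2
    · exact ih _ (by omega) a _ rfl ha hm b hab hbm
    · exact ih _ (by omega) _ c rfl hm hc b (by omega) hbc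

/-- Every ideal of the interval-midpoint majority algebra on `{1,…,n}` (a subset
`I` such that `f(a,b,c) ∈ I` whenever at least two of `a,b,c` lie in `I`)
is convex. -/
theorem midpoint_ideal_convex (n : ℕ) (I : Set ℕ)
    (hI : I ⊆ Set.Icc 1 n)
    (hideal : ∀ a b c : ℕ, a ∈ Set.Icc 1 n → b ∈ Set.Icc 1 n → c ∈ Set.Icc 1 n →
      ((a ∈ I ∧ b ∈ I) ∨ (a ∈ I ∧ c ∈ I) ∨ (b ∈ I ∧ c ∈ I)) → fA a b c ∈ I) :
    ∀ a b c : ℕ, a ∈ I → c ∈ I → a ≤ b → b ≤ c → b ∈ I := by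
  have hmid : ∀ a ∈ I, ∀ c ∈ I, a ≤ c → (a + c) / 2 ∈ I := by
    intro a ha c hc hac
    have ha' := hI ha
    have hc' := hI hc
    rw [Set.mem_Icc] at ha' hc'
    have hm : (a + c) / 2 ∈ Set.Icc 1 n := Set.mem_Icc.2 ⟨by omega, by omega⟩
    simpa only [fA_floor_midpoint hac] using
      hideal a _ c (hI ha) hm (hI hc) (Or.inr (Or.inl ⟨ha, hc⟩))
  intro a b c ha hc hab hbc
  exact (Set.ordConnected_of_floor_midpoint_mem hmid).out ha hc ⟨hab, hbc⟩
end

section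
/- Let f be a majority operation on a set A such that the clone generated by f contains exactly 4 nontrivial ternary operations {p,q,r,s}, where s is totally symmetric and p, q, r are invariant under the transpositions (23), (13), (12) respectively and are cyclic variants of one another (q(x,y,z) = p(y,z,x), r(x,y,z) = q(y,z,x)). Then any ternary operation g generated by f maps the set {p,q,r,s} (viewed as elements of the free ternary part, acting by composition) into itself; in particular the composition s∘(p,q,r) given by x ↦ s(p(x),q(x),r(x)) on A³ is totally symmetric under permuting the three input variables. -/
/-- The action of `π ∈ S₃` on ternary operations by permuting variables. -/
def permAct {A : Type*} (π : Equiv.Perm (Fin 3)) (f : (Fin 3 → A) → A) :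
    (Fin 3 → A) → A :=
  fun v => f (fun i => v (π i))

lemma clone_idem {A : Type*} {f : (Fin 3 → A) → A} (hf : IsMajority f) :
    ∀ {n : ℕ} {g : (Fin n → A) → A}, InClone f n g → ∀ a : A, g (fun _ => a) = a := by
  intro n g hg
  induction hg with
  | gen =>
    intro a
    have h := (hf a a).1
    rwa [show ![a,a,a] = (fun _ : Fin 3 => a) from by funext i; fin_cases i <;> rfl] at h
  | proj n i => intro a; rfl
  | comp g h hg hh ihg ihh =>
    intro a
    show g (fun i => h i (fun _ => a)) = a
    rw [show (fun i => h i (fun _ => a)) = (fun _ => a) from funext fun i => ihh i a]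
    exact ihg a

lemma comp3 {A : Type*} {f g u0 u1 u2 : (Fin 3 → A) → A} (hg : InClone f 3 g)
    (h0 : InClone f 3 u0) (h1 : InClone f 3 u1) (h2 : InClone f 3 u2) :
    InClone f 3 (fun v => g ![u0 v, u1 v, u2 v]) := by
  have h := InClone.comp (f := f) g ![u0, u1, u2] hg (by
    intro i; fin_cases i <;> assumption)
  have e : (fun x => g (fun i => ![u0, u1, u2] i x)) = fun v => g ![u0 v, u1 v, u2 v] := by
    funext x; congr 1; funext i; fin_cases i <;> rfl
  rwa [e] at h

lemma collapse_aux {A : Type*} {s : (Fin 3 → A) → A}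
    (hs : ∀ π : Equiv.Perm (Fin 3), permAct π s = s)
    (hM : IsMajority s)
    (habs : ∀ v, s ![s v, v 1, v 2] = s v) :
    ∀ {n : ℕ} {g : (Fin n → A) → A}, InClone s n g →
      ∀ h : Fin n → ((Fin 3 → A) → A),
        (∀ i, (∃ j, h i = fun v => v j) ∨ h i = s) →
        (∃ j, (fun v => g (fun i => h i v)) = fun v => v j) ∨
          ((fun v => g (fun i => h i v)) = s) := by
  have hs_eval : ∀ (σ : Equiv.Perm (Fin 3)) (w : Fin 3 → A), s (fun i => w (σ i)) = s w :=
    fun σ w => congrFun (hs σ) w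
  have key : ∀ (σ : Equiv.Perm (Fin 3)) (v : Fin 3 → A),
      s ![s v, v (σ 1), v (σ 2)] = s v := by
    intro σ v
    have h1 := habs (fun k => v (σ k))
    rw [hs_eval σ v] at h1
    exact h1
  have habs' : ∀ (v : Fin 3 → A) (i j : Fin 3), i ≠ j → s ![s v, v i, v j] = s v := by
    intro v i j hij
    fin_cases i <;> fin_cases j <;> simp only [Fin.isValue] <;>
      first
        | exact absurd rfl hij
        | exact key (finRotate 3 * finRotate 3) v
        | exact key (Equiv.swap 0 1) v
        | exact key (finRotate 3) v
        | exact key (Equiv.swap 0 2) v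
        | exact key 1 v
        | exact key (Equiv.swap 1 2) v
  have sswap : ∀ (σ : Equiv.Perm (Fin 3)) (w : Fin 3 → A),
      s ![w (σ 0), w (σ 1), w (σ 2)] = s w := by
    intro σ w
    have h1 := hs_eval σ w
    rwa [show (fun i => w (σ i)) = ![w (σ 0), w (σ 1), w (σ 2)] from by
      funext i; fin_cases i <;> rfl] at h1
  have sw01 : ∀ a b c : A, s ![a, b, c] = s ![b, a, c] := fun a b c =>
    sswap (Equiv.swap 0 1) ![b, a, c]
  have rot : ∀ a b c : A, s ![a, b, c] = s ![c, a, b] := fun a b c =>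
    sswap (finRotate 3) ![c, a, b]
  intro n g hg
  induction hg with
  | gen =>
    intro h hh
    have e : (fun v => s (fun i => h i v)) = fun v => s ![h 0 v, h 1 v, h 2 v] := by
      funext v; congr 1; funext i; fin_cases i <;> rfl
    rw [e]
    rcases hh 0 with ⟨j0, e0⟩ | e0 <;> rcases hh 1 with ⟨j1, e1⟩ | e1 <;>
      rcases hh 2 with ⟨j2, e2⟩ | e2 <;> simp only [e0, e1, e2]
    · -- proj proj proj
      by_cases h01 : j0 = j1
      · subst h01; exact Or.inl ⟨j0, funext fun v => (hM (v j0) (v j2)).1⟩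
      by_cases h02 : j0 = j2
      · subst h02; exact Or.inl ⟨j0, funext fun v => (hM (v j0) (v j1)).2.1⟩
      by_cases h12 : j1 = j2
      · subst h12; exact Or.inl ⟨j1, funext fun v => (hM (v j1) (v j0)).2.2⟩
      · have hinj : Function.Injective ![j0, j1, j2] := by
          intro a b hab
          fin_cases a <;> fin_cases b <;> simp_all
        have hbij := Finite.injective_iff_bijective.mp hinj
        right
        funext v
        exact sswap (Equiv.ofBijective _ hbij) v
    · -- proj proj s
      by_cases h01 : j0 = j1
      · subst h01; exact Or.inl ⟨j0, funext fun v => by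
          rw [rot]  -- s ![s v, v j0, v j0]
          exact (hM (v j0) (s v)).2.2⟩
      · right; funext v
        rw [rot]
        exact habs' v j0 j1 h01
    · -- proj s proj
      by_cases h02 : j0 = j2
      · subst h02; exact Or.inl ⟨j0, funext fun v => by
          rw [sw01]
          exact (hM (v j0) (s v)).2.2⟩
      · right; funext v
        rw [sw01]
        exact habs' v j0 j2 h02
    · -- proj s s
      right; funext v; exact (hM (s v) (v j0)).2.2
    · -- s proj proj
      by_cases h12 : j1 = j2
      · subst h12; exact Or.inl ⟨j1, funext fun v => (hM (v j1) (s v)).2.2⟩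
      · right; funext v
        exact habs' v j1 j2 h12
    · -- s proj s
      right; funext v; exact (hM (s v) (v j1)).2.1
    · -- s s proj
      right; funext v; exact (hM (s v) (v j2)).1
    · -- s s s
      right; funext v; exact (hM (s v) (s v)).1
  | proj n i =>
    intro h hh
    exact hh i
  | comp g hin hg hinn ihg ihin =>
    intro h hh
    exact ihg (fun i => fun v => hin i (fun j => h j v)) (fun i => ihin i h hh)

/-- Suppose the clone generated by a majority operation `f` contains exactly four
nontrivial ternary operations `p, q, r, s`, where `s` is totally symmetric,
`p, q, r` are invariant under the transpositions `(23), (13), (12)` respectively,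
and `q, r` are cyclic variants of `p, q`. Then every ternary operation in the clone
maps `{p,q,r,s}` into itself under composition; in particular, the composition
`v ↦ s(p(v), q(v), r(v))` is totally symmetric. -/
theorem four_majority_compositions {A : Type*} (f : (Fin 3 → A) → A)
    (hf : IsMajority f) (p q r s : (Fin 3 → A) → A)
    (hdist : [p, q, r, s].Nodup)
    (hexact : {g : (Fin 3 → A) → A | InClone f 3 g ∧ ¬ IsProjection g} = {p, q, r, s})
    (hs : ∀ π : Equiv.Perm (Fin 3), permAct π s = s)
    (hp : permAct (Equiv.swap 1 2) p = p)
    (hq : permAct (Equiv.swap 0 2) q = q)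
    (hr : permAct (Equiv.swap 0 1) r = r)
    (hqp : q = permAct (finRotate 3) p)
    (hrq : r = permAct (finRotate 3) q) :
    (∀ g : (Fin 3 → A) → A, InClone f 3 g →
      ∀ u : Fin 3 → (Fin 3 → A) → A, (∀ i, u i ∈ ({p, q, r, s} : Set _)) →
        (fun v => g (fun i => u i v)) ∈ ({p, q, r, s} : Set _)) ∧
    (∀ π : Equiv.Perm (Fin 3),
      permAct π (fun v => s ![p v, q v, r v]) = fun v => s ![p v, q v, r v]) := by
  classical
  -- membership characterization
  have hiff : ∀ g' : (Fin 3 → A) → A,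
      (InClone f 3 g' ∧ ¬ IsProjection g') ↔ (g' = p ∨ g' = q ∨ g' = r ∨ g' = s) := by
    intro g'
    have h := Set.ext_iff.mp hexact g'
    simpa [Set.mem_insert_iff, Set.mem_singleton_iff] using h
  obtain ⟨hpC, hpNP⟩ := (hiff p).mpr (Or.inl rfl)
  obtain ⟨hqC, hqNP⟩ := (hiff q).mpr (Or.inr (Or.inl rfl))
  obtain ⟨hrC, hrNP⟩ := (hiff r).mpr (Or.inr (Or.inr (Or.inl rfl)))
  obtain ⟨hsC, hsNP⟩ := (hiff s).mpr (Or.inr (Or.inr (Or.inr rfl)))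
  -- distinctness
  have hdist' : p ≠ q ∧ p ≠ r ∧ p ≠ s ∧ q ≠ r ∧ q ≠ s ∧ r ≠ s := by
    simp only [List.nodup_cons, List.mem_cons, List.mem_singleton,
      List.not_mem_nil, or_false, List.nodup_nil, and_true, not_or] at hdist
    tauto
  obtain ⟨hPQ, hPR, hPS, hQR, hQS, hRS⟩ := hdist'
  -- two distinct elements
  obtain ⟨a, b, hab⟩ : ∃ a b : A, a ≠ b := by
    by_contra hcon
    push_neg at hcon
    exact hpNP ⟨0, fun x => hcon _ _⟩
  -- small helpers
  have hconst : ∀ x : A, ![x, x, x] = (fun _ : Fin 3 => x) := by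
    intro x; funext i; fin_cases i <;> rfl
  have sidem : ∀ x : A, s ![x, x, x] = x := by
    intro x; rw [hconst]; exact clone_idem hf hsC x
  have hs_eval : ∀ (σ : Equiv.Perm (Fin 3)) (w : Fin 3 → A), s (fun i => w (σ i)) = s w :=
    fun σ w => congrFun (hs σ) w
  -- permutation algebra
  have pmul : ∀ (π σ : Equiv.Perm (Fin 3)) (g : (Fin 3 → A) → A),
      permAct (π * σ) g = permAct π (permAct σ g) := fun _ _ _ => rfl
  have pone : ∀ g : (Fin 3 → A) → A, permAct 1 g = g := fun _ => rfl
  have hρp : permAct (finRotate 3) p = q := hqp.symm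
  have hρq : permAct (finRotate 3) q = r := hrq.symm
  have hρr : permAct (finRotate 3) r = p := by
    rw [hrq, hqp, ← pmul, ← pmul,
      show finRotate 3 * finRotate 3 * finRotate 3 = 1 from by decide, pone]
  have hτq : permAct (Equiv.swap 1 2) q = r := by
    rw [hqp, ← pmul, show Equiv.swap 1 2 * finRotate 3
        = finRotate 3 * (finRotate 3 * Equiv.swap 1 2) from by decide,
      pmul, pmul, hp, hρp, hρq]
  have hτr : permAct (Equiv.swap 1 2) r = q := by
    rw [hrq, ← pmul, show Equiv.swap 1 2 * finRotate 3
        = finRotate 3 * (finRotate 3 * Equiv.swap 1 2) from by decide,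
      pmul, pmul, hτq, hρr, hρp]
  -- Part 2 : total symmetry of s ∘ (p,q,r)
  have hT2 : ∀ π : Equiv.Perm (Fin 3),
      permAct π (fun v => s ![p v, q v, r v]) = fun v => s ![p v, q v, r v] := by
    have hρT : permAct (finRotate 3) (fun v => s ![p v, q v, r v])
        = fun v => s ![p v, q v, r v] := by
      funext v
      show s ![permAct (finRotate 3) p v, permAct (finRotate 3) q v,
        permAct (finRotate 3) r v] = s ![p v, q v, r v]
      rw [hρp, hρq, hρr]
      have h1 := hs_eval (finRotate 3) ![p v, q v, r v]
      rwa [show (fun i => (![p v, q v, r v]) ((finRotate 3) i)) = ![q v, r v, p v] from by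
        funext i; fin_cases i <;> rfl] at h1
    have hτT : permAct (Equiv.swap 1 2) (fun v => s ![p v, q v, r v])
        = fun v => s ![p v, q v, r v] := by
      funext v
      show s ![permAct (Equiv.swap 1 2) p v, permAct (Equiv.swap 1 2) q v,
        permAct (Equiv.swap 1 2) r v] = s ![p v, q v, r v]
      rw [hp, hτq, hτr]
      have h1 := hs_eval (Equiv.swap 1 2) ![p v, q v, r v]
      rwa [show (fun i => (![p v, q v, r v]) ((Equiv.swap 1 2) i)) = ![p v, r v, q v] from by
        funext i; fin_cases i <;> rfl] at h1
    have henum : ∀ π : Equiv.Perm (Fin 3), π = 1 ∨ π = finRotate 3 ∨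
        π = finRotate 3 * finRotate 3 ∨ π = Equiv.swap 1 2 ∨
        π = Equiv.swap 1 2 * finRotate 3 ∨
        π = Equiv.swap 1 2 * (finRotate 3 * finRotate 3) := by decide
    intro π
    rcases henum π with e | e | e | e | e | e <;> subst e
    · exact pone _
    · exact hρT
    · rw [pmul, hρT, hρT]
    · exact hτT
    · rw [pmul, hρT, hτT]
    · rw [pmul, pmul, hρT, hρT, hτT]
  -- majority utilities
  have maj_not_proj : ∀ {g : (Fin 3 → A) → A}, IsMajority g → ¬ IsProjection g := by
    rintro g hg ⟨i, hi⟩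
    fin_cases i
    · exact hab (((hg a b).2.2).symm.trans (hi ![b, a, a]))
    · exact hab (((hg a b).2.1).symm.trans (hi ![a, b, a]))
    · exact hab (((hg a b).1).symm.trans (hi ![a, a, b]))
  have maj_rho : ∀ g : (Fin 3 → A) → A, IsMajority g → IsMajority (permAct (finRotate 3) g) := by
    intro g hg x y
    refine ⟨?_, ?_, ?_⟩
    · show g (fun i => (![x, x, y]) ((finRotate 3) i)) = x
      rw [show (fun i => (![x, x, y]) ((finRotate 3) i)) = ![x, y, x] from by
        funext i; fin_cases i <;> rfl]
      exact (hg x y).2.1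
    · show g (fun i => (![x, y, x]) ((finRotate 3) i)) = x
      rw [show (fun i => (![x, y, x]) ((finRotate 3) i)) = ![y, x, x] from by
        funext i; fin_cases i <;> rfl]
      exact (hg x y).2.2
    · show g (fun i => (![y, x, x]) ((finRotate 3) i)) = x
      rw [show (fun i => (![y, x, x]) ((finRotate 3) i)) = ![x, x, y] from by
        funext i; fin_cases i <;> rfl]
      exact (hg x y).1
  have cyc : IsMajority p ∨ IsMajority q ∨ IsMajority r →
      IsMajority p ∧ IsMajority q ∧ IsMajority r := by
    intro hOr
    have h1 : IsMajority p → IsMajority q := fun h => by rw [← hρp]; exact maj_rho p h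
    have h2 : IsMajority q → IsMajority r := fun h => by rw [← hρq]; exact maj_rho q h
    have h3 : IsMajority r → IsMajority p := fun h => by rw [← hρr]; exact maj_rho r h
    rcases hOr with h | h | h
    · exact ⟨h, h1 h, h2 (h1 h)⟩
    · exact ⟨h3 (h2 h), h, h2 h⟩
    · exact ⟨h3 h, h1 (h3 h), h⟩
  -- from s(x,x,z) = x we get full majority of s
  have goodS : (∀ x z : A, s ![x, x, z] = x) → IsMajority s := by
    intro h x y
    refine ⟨h x y, ?_, ?_⟩
    · have h1 := hs_eval (Equiv.swap 1 2) ![x, y, x]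
      rw [show (fun i => (![x, y, x]) ((Equiv.swap 1 2) i)) = ![x, x, y] from by
        funext i; fin_cases i <;> rfl] at h1
      rw [← h1]; exact h x y
    · have h1 := hs_eval (finRotate 3) ![y, x, x]
      rw [show (fun i => (![y, x, x]) ((finRotate 3) i)) = ![x, x, y] from by
        funext i; fin_cases i <;> rfl] at h1
      rw [← h1]; exact h x y
  -- minority is impossible
  have hmin : (∀ x z : A, s ![x, x, z] = z) → False := by
    intro hm
    have fNP : ¬ IsProjection f := maj_not_proj hf
    have hTm : IsMajority p ∧ IsMajority q ∧ IsMajority r := by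
      rcases (hiff f).mp ⟨InClone.gen, fNP⟩ with e | e | e | e
      · exact cyc (Or.inl (by rw [← e]; exact hf))
      · exact cyc (Or.inr (Or.inl (by rw [← e]; exact hf)))
      · exact cyc (Or.inr (Or.inr (by rw [← e]; exact hf)))
      · have h1 : s ![a, a, b] = a := by rw [← e]; exact (hf a b).1
        exact (hab (h1.symm.trans (hm a b))).elim
    obtain ⟨hPm', hQm', hRm'⟩ := hTm
    have htC : InClone f 3 (fun v => s ![p v, q v, r v]) := comp3 hsC hpC hqC hrC
    have htM : IsMajority (fun v => s ![p v, q v, r v]) := by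
      intro x y
      refine ⟨?_, ?_, ?_⟩
      · show s ![p ![x,x,y], q ![x,x,y], r ![x,x,y]] = x
        rw [(hPm' x y).1, (hQm' x y).1, (hRm' x y).1]; exact hm x x
      · show s ![p ![x,y,x], q ![x,y,x], r ![x,y,x]] = x
        rw [(hPm' x y).2.1, (hQm' x y).2.1, (hRm' x y).2.1]; exact hm x x
      · show s ![p ![y,x,x], q ![y,x,x], r ![y,x,x]] = x
        rw [(hPm' x y).2.2, (hQm' x y).2.2, (hRm' x y).2.2]; exact hm x x
    rcases (hiff _).mp ⟨htC, maj_not_proj htM⟩ with e | e | e | e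
    · have h2 : q = p := by rw [hqp, ← e]; exact hT2 (finRotate 3)
      exact hPQ h2.symm
    · have h2 : r = q := by rw [hrq, ← e]; exact hT2 (finRotate 3)
      exact hQR h2.symm
    · have h2 : p = r := by rw [← hρr, ← e]; exact hT2 (finRotate 3)
      exact hPR h2
    · have h1 : s ![a, a, b] = a := by rw [← e]; exact (htM a b).1
      exact hab (h1.symm.trans (hm a b))
  -- Step 1 : s is a majority operation
  have hSm : IsMajority s := by
    have hσC : InClone f 3 (fun v => s ![v 0, v 0, v 2]) :=
      comp3 hsC (InClone.proj 3 0) (InClone.proj 3 0) (InClone.proj 3 2)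
    by_cases hσP : IsProjection (fun v : Fin 3 → A => s ![v 0, v 0, v 2])
    · obtain ⟨i, hi⟩ := hσP
      fin_cases i
      · exact goodS (fun x z => hi ![x, x, z])
      · exact absurd ((hi ![a, a, b]).symm.trans (hi ![a, b, b])) hab
      · exact (hmin (fun x z => hi ![x, x, z])).elim
    · rcases (hiff _).mp ⟨hσC, hσP⟩ with e | e | e | e
      · -- = p
        have hpe : ∀ v : Fin 3 → A, p v = s ![v 0, v 0, v 2] :=
          fun v => (congrFun e v).symm
        have hpswap : ∀ v : Fin 3 → A, p ![v 0, v 2, v 1] = p v := by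
          intro v
          have h1 : p (fun i => v ((Equiv.swap 1 2) i)) = p v := congrFun hp v
          rwa [show (fun i => v ((Equiv.swap 1 2) i)) = ![v 0, v 2, v 1] from by
            funext i; fin_cases i <;> rfl] at h1
        refine goodS (fun x z => ?_)
        calc s ![x, x, z] = p ![x, x, z] := (hpe ![x, x, z]).symm
          _ = p ![x, z, x] := hpswap ![x, z, x]
          _ = s ![x, x, x] := hpe ![x, z, x]
          _ = x := sidem x
      · -- = q
        have hqe : ∀ v : Fin 3 → A, q v = s ![v 0, v 0, v 2] :=
          fun v => (congrFun e v).symm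
        have hpform : ∀ v : Fin 3 → A, p v = s ![v 2, v 2, v 1] := by
          intro v
          have h1 := congrFun hqp ![v 2, v 0, v 1]
          rw [show permAct (finRotate 3) p ![v 2, v 0, v 1] = p v from by
            show p _ = p v
            congr 1; funext i; fin_cases i <;> rfl] at h1
          rw [← h1]; exact hqe ![v 2, v 0, v 1]
        have hrform : ∀ v : Fin 3 → A, r v = s ![v 1, v 1, v 0] := by
          intro v
          have h1 := congrFun hrq v
          rw [show permAct (finRotate 3) q v = q ![v 1, v 2, v 0] from by
            show q _ = q _
            congr 1; funext i; fin_cases i <;> rfl] at h1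
          rw [h1]; exact hqe ![v 1, v 2, v 0]
        rcases (hiff f).mp ⟨InClone.gen, maj_not_proj hf⟩ with e2 | e2 | e2 | e2
        · have hfm : IsMajority p := by rw [← e2]; exact hf
          refine goodS (fun x z => ?_)
          have h1 := (hfm x z).2.1
          rwa [hpform ![x, z, x]] at h1
        · have hfm : IsMajority q := by rw [← e2]; exact hf
          refine goodS (fun x z => ?_)
          have h1 := (hfm x z).1
          rwa [hqe ![x, x, z]] at h1
        · have hfm : IsMajority r := by rw [← e2]; exact hf
          refine goodS (fun x z => ?_)
          have h1 := (hfm x z).2.2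
          rwa [hrform ![z, x, x]] at h1
        · rw [← e2]; exact hf
      · -- = r
        have hre : ∀ v : Fin 3 → A, r v = s ![v 0, v 0, v 2] :=
          fun v => (congrFun e v).symm
        have hrswap : ∀ v : Fin 3 → A, r ![v 1, v 0, v 2] = r v := by
          intro v
          have h1 : r (fun i => v ((Equiv.swap 0 1) i)) = r v := congrFun hr v
          rwa [show (fun i => v ((Equiv.swap 0 1) i)) = ![v 1, v 0, v 2] from by
            funext i; fin_cases i <;> rfl] at h1
        refine (hmin (fun x z => ?_)).elim
        calc s ![x, x, z] = r ![x, z, z] := (hre ![x, z, z]).symm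
          _ = r ![z, x, z] := hrswap ![z, x, z]
          _ = s ![z, z, z] := hre ![z, x, z]
          _ = z := sidem z
      · -- = s
        have hse : ∀ v : Fin 3 → A, s v = s ![v 0, v 0, v 2] :=
          fun v => (congrFun e v).symm
        refine (hmin (fun x z => ?_)).elim
        have sw01' : ∀ a' b' c' : A, s ![a', b', c'] = s ![b', a', c'] := by
          intro a' b' c'
          have h1 := hs_eval (Equiv.swap 0 1) ![b', a', c']
          rwa [show (fun i => (![b', a', c']) ((Equiv.swap 0 1) i)) = ![a', b', c'] from by
            funext i; fin_cases i <;> rfl] at h1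
        calc s ![x, x, z] = s ![x, z, z] := (hse ![x, z, z]).symm
          _ = s ![z, x, z] := sw01' x z z
          _ = s ![z, z, z] := hse ![z, x, z]
          _ = z := sidem z
  -- Step 2 : p, q, r are majority
  have hPQR : IsMajority p ∧ IsMajority q ∧ IsMajority r := by
    rcases (hiff f).mp ⟨InClone.gen, maj_not_proj hf⟩ with e | e | e | e
    · exact cyc (Or.inl (by rw [← e]; exact hf))
    · exact cyc (Or.inr (Or.inl (by rw [← e]; exact hf)))
    · exact cyc (Or.inr (Or.inr (by rw [← e]; exact hf)))
    · -- f = s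
      have hαC : InClone f 3 (fun v => s ![s v, v 1, v 2]) :=
        comp3 hsC hsC (InClone.proj 3 1) (InClone.proj 3 2)
      have hαM : IsMajority (fun v => s ![s v, v 1, v 2]) := by
        intro x y
        refine ⟨?_, ?_, ?_⟩
        · show s ![s ![x, x, y], x, y] = x
          rw [(hSm x y).1]; exact (hSm x y).1
        · show s ![s ![x, y, x], y, x] = x
          rw [(hSm x y).2.1]; exact (hSm x y).2.1
        · show s ![s ![y, x, x], x, x] = x
          rw [(hSm x y).2.2]; exact sidem x
      rcases (hiff _).mp ⟨hαC, maj_not_proj hαM⟩ with e2 | e2 | e2 | e2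
      · exact cyc (Or.inl (by rw [← e2]; exact hαM))
      · exact cyc (Or.inr (Or.inl (by rw [← e2]; exact hαM)))
      · exact cyc (Or.inr (Or.inr (by rw [← e2]; exact hαM)))
      · have habs : ∀ v, s ![s v, v 1, v 2] = s v := fun v => congrFun e2 v
        have hpC' : InClone s 3 p := by rw [← e]; exact hpC
        rcases collapse_aux hs hSm habs hpC' (fun i v => v i)
            (fun i => Or.inl ⟨i, rfl⟩) with ⟨j, hj⟩ | hj
        · exact absurd ⟨j, fun x => congrFun hj x⟩ hpNP
        · exact absurd (funext fun x => congrFun hj x) hPS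
  obtain ⟨hPm, hQm, hRm⟩ := hPQR
  constructor
  · intro g hg u hu
    have humem : ∀ i, u i = p ∨ u i = q ∨ u i = r ∨ u i = s := by
      intro i
      have h1 := hu i
      simpa [Set.mem_insert_iff, Set.mem_singleton_iff] using h1
    have huC : ∀ i, InClone f 3 (u i) := by
      intro i
      rcases humem i with h | h | h | h <;> rw [h] <;> assumption
    have huM : ∀ i, IsMajority (u i) := by
      intro i
      rcases humem i with h | h | h | h <;> rw [h] <;> assumption
    have hcM : IsMajority (fun v => g (fun i => u i v)) := by
      intro x y
      refine ⟨?_, ?_, ?_⟩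
      · show g (fun i => u i ![x, x, y]) = x
        rw [show (fun i => u i ![x, x, y]) = (fun _ => x) from
          funext fun i => (huM i x y).1]
        exact clone_idem hf hg x
      · show g (fun i => u i ![x, y, x]) = x
        rw [show (fun i => u i ![x, y, x]) = (fun _ => x) from
          funext fun i => (huM i x y).2.1]
        exact clone_idem hf hg x
      · show g (fun i => u i ![y, x, x]) = x
        rw [show (fun i => u i ![y, x, x]) = (fun _ => x) from
          funext fun i => (huM i x y).2.2]
        exact clone_idem hf hg x
    have hmem : (fun v => g (fun i => u i v)) ∈
        {g' : (Fin 3 → A) → A | InClone f 3 g' ∧ ¬ IsProjection g'} :=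
      ⟨InClone.comp g u hg huC, maj_not_proj hcM⟩
    rwa [hexact] at hmem
  · exact hT2
end
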